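/- Let S be a set of positive integers, r ≥ 0 an integer, and n ≥ 1, k ≥ 1 integers. Then k·L_{S,r}(n,k) = Σ_{s∈S} s!·C(n,s)·L_{S,r}(n−s, k−1), where the sum has only finitely many nonzero terms (terms with s > n vanish). -/

import Mathlib

open Finset
open scoped Classical

/-- A partition of `Fin N` into nonempty lists of distinct elements:
every element lies in exactly one list of `P`. -/
def IsListPartition {N : ℕ} (P : Finset (List (Fin N))) : Prop :=
  (∀ l ∈ P, l ≠ [] ∧ l.Nodup) ∧ ∀ x : Fin N, ∃! l, l ∈ P ∧ x ∈ l

/-- The set of partitions of `{1,…,n+r}` (encoded as `Fin (n+r)`) into `k+r` nonempty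
lists whose lengths lie in `S`, such that the first `r` elements lie in distinct lists. -/
def srLahSet (S : Set ℕ) (r n k : ℕ) : Set (Finset (List (Fin (n + r)))) :=
  {P | IsListPartition P ∧ P.card = k + r ∧ (∀ l ∈ P, l.length ∈ S) ∧
    ∀ i j : Fin (n + r), (i : ℕ) < r → (j : ℕ) < r → i ≠ j →
      ∀ l ∈ P, i ∈ l → j ∉ l}

/-- The `(S,r)`-Lah number `L_{S,r}(n,k)`. -/
noncomputable def srLah (S : Set ℕ) (r n k : ℕ) : ℕ := Nat.card (srLahSet S r n k)

/-- The `(S,r)`-Lah number with integer arguments, zero for negative arguments. -/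
noncomputable def srLahZ (S : Set ℕ) (r : ℕ) (n k : ℤ) : ℤ :=
  if 0 ≤ n ∧ 0 ≤ k then srLah S r n.toNat k.toNat else 0

/-!
Double count the pairs `(P, L)` of an `(S,r)`-partition `P` into `k + r` lists and a list
`L ∈ P` free of special elements. The `r` special elements lie in `r` distinct lists, so every
`P` has exactly `k` such lists. Conversely, such an `L` of length `s` is an ordered choice of `s`
non-special elements (`s! C(n,s)` ways), and removing it from `P` leaves a partition of the
remaining `n - s + r` elements; relabelling these increasingly fixes the special elements, so
what is left is any `(S,r)`-partition counted by `L_{S,r}(n - s, k - 1)`.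
-/

open Function

namespace IsListPartition

variable {N : ℕ} {P : Finset (List (Fin N))}

lemma eq_of_mem_of_mem (hP : IsListPartition P) {l₁ l₂ : List (Fin N)} {x : Fin N}
    (h₁ : l₁ ∈ P) (h₂ : l₂ ∈ P) (hx₁ : x ∈ l₁) (hx₂ : x ∈ l₂) : l₁ = l₂ :=
  (hP.2 x).unique ⟨h₁, hx₁⟩ ⟨h₂, hx₂⟩

lemma card_filter_exists_mem (hP : IsListPartition P) {A : Finset (Fin N)}
    (hA : ∀ l ∈ P, ∀ a ∈ A, ∀ b ∈ A, a ∈ l → b ∈ l → a = b) :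
    (P.filter fun l => ∃ a ∈ A, a ∈ l).card = A.card := by
  have hspec (a : Fin N) := (hP.2 a).choose_spec.1
  symm
  refine card_bij (fun a _ => (hP.2 a).choose) (fun a ha => ?_) (fun a ha b hb hab => ?_)
    (fun l hl => ?_)
  · exact mem_filter.2 ⟨(hspec a).1, a, ha, (hspec a).2⟩
  · exact hA _ (hspec a).1 a ha b hb (hspec a).2 (hab ▸ (hspec b).2)
  · obtain ⟨hlP, a, ha, hal⟩ := mem_filter.1 hl
    exact ⟨a, ha, hP.eq_of_mem_of_mem (hspec a).1 hlP (hspec a).2 hal⟩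

lemma length_le (hP : IsListPartition P) {l : List (Fin N)} (hl : l ∈ P) : l.length ≤ N := by
  simpa using (hP.1 l hl).2.length_le_card

end IsListPartition

instance (S : Set ℕ) (r n k : ℕ) : Finite (srLahSet S r n k) := by
  let lists := (List.finite_length_le (Fin (n + r)) (n + r)).toFinset
  refine Set.Finite.to_subtype (lists.powerset.finite_toSet.subset fun P hP => ?_)
  simp only [lists, coe_powerset, Set.mem_preimage, Set.mem_powerset_iff, Set.Finite.coe_toFinset]
  exact fun l hl => hP.1.length_le hl

lemma card_filter_forall_le_of_mem_srLahSet {S : Set ℕ} {r n k : ℕ}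
    {P : Finset (List (Fin (n + r)))} (hP : P ∈ srLahSet S r n k) :
    (P.filter fun l : List (Fin (n + r)) => ∀ x ∈ l, r ≤ (x : ℕ)).card = k := by
  set specials : Finset (Fin (n + r)) := univ.filter fun x => (x : ℕ) < r
  have hcard : specials.card = r := by
    simpa using Fin.card_filter_val_lt (n := n + r) (m := r)
  have hmeet : (P.filter fun l => ∃ a ∈ specials, a ∈ l).card = r := by
    rw [hP.1.card_filter_exists_mem, hcard]
    intro l hl a ha b hb hal hbl
    by_contra hab
    exact hP.2.2.2 a b (mem_filter.1 ha).2 (mem_filter.1 hb).2 hab l hl hal hbl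
  have hsplit := card_filter_add_card_filter_not (s := P) (p := fun l => ∃ a ∈ specials, a ∈ l)
  rw [hmeet, hP.2.1] at hsplit
  rw [← filter_congr (p := fun l => ¬∃ a ∈ specials, a ∈ l) fun l _ => by
    simp [specials]; grind]
  omega

def nodupListEquivEmbedding {α : Type*} (p : α → Prop) (s : ℕ) :
    {l : List α // l.Nodup ∧ l.length = s ∧ ∀ x ∈ l, p x} ≃ (Fin s ↪ {x // p x}) where
  toFun l := ⟨fun i => ⟨l.1.get (i.cast l.2.2.1.symm), l.2.2.2 _ (List.get_mem _ _)⟩,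
    fun i j hij => by
      simpa [Fin.ext_iff] using List.nodup_iff_injective_get.1 l.2.1 (Subtype.ext_iff.1 hij)⟩
  invFun f := ⟨List.ofFn fun i => (f i : α),
    List.nodup_ofFn.2 (Subtype.val_injective.comp f.injective), List.length_ofFn,
    fun x hx => by obtain ⟨i, rfl⟩ := List.mem_ofFn.1 hx; exact (f i).2⟩
  left_inv l := Subtype.ext <| List.ext_get (by simp [l.2.2.1]) fun _ _ _ => by simp; rfl
  right_inv f := by ext; simp

def nonspecialLists (N r s : ℕ) : Set (List (Fin N)) :=
  {L | L.Nodup ∧ L.length = s ∧ ∀ x ∈ L, r ≤ (x : ℕ)}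

instance (N r s : ℕ) : Finite (nonspecialLists N r s) :=
  Finite.of_equiv _ (nodupListEquivEmbedding (fun x : Fin N => r ≤ (x : ℕ)) s).symm

section NonspecialLists

variable {n r s : ℕ}

lemma card_subtype_le_val : Fintype.card {x : Fin (n + r) // r ≤ (x : ℕ)} = n := by
  have h := card_filter_add_card_filter_not (s := (univ : Finset (Fin (n + r))))
    (p := fun x => (x : ℕ) < r)
  simp only [Fin.card_filter_val_lt, card_univ, Fintype.card_fin, not_lt] at h
  rw [Fintype.card_subtype]
  omega

lemma card_nonspecialLists :
    Nat.card (nonspecialLists (n + r) r s) = s.factorial * n.choose s := by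
  refine (Nat.card_congr (nodupListEquivEmbedding (fun x : Fin (n + r) => r ≤ (x : ℕ)) s)).trans
    ?_
  rw [Nat.card_eq_fintype_card, Fintype.card_embedding_eq, Fintype.card_fin, card_subtype_le_val,
    Nat.descFactorial_eq_factorial_mul_choose]

lemma length_le_of_mem_nonspecialLists {L : List (Fin (n + r))}
    (hL : L ∈ nonspecialLists (n + r) r s) : s ≤ n := by
  simpa [card_subtype_le_val] using Fintype.card_le_of_embedding
    (nodupListEquivEmbedding (fun x : Fin (n + r) => r ≤ (x : ℕ)) s ⟨L, hL⟩)

end NonspecialLists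

lemma StrictMono.val_le_val_apply {a b : ℕ} {f : Fin a → Fin b} (hf : StrictMono f)
    (y : Fin a) : (y : ℕ) ≤ f y := by
  obtain ⟨y, hy⟩ := y
  induction y with
  | zero => exact Nat.zero_le _
  | succ i ih =>
    have hlt : f ⟨i, by omega⟩ < f ⟨i + 1, hy⟩ := hf (Fin.mk_lt_mk.2 i.lt_succ_self)
    have := ih (by omega)
    simp only [Fin.lt_def] at hlt this ⊢
    omega

lemma StrictMono.val_lt_iff_of_forall_lt_mem_range {a b r : ℕ} {f : Fin a → Fin b}
    (hf : StrictMono f) (hr : ∀ x : Fin b, (x : ℕ) < r → x ∈ Set.range f) (y : Fin a) :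
    (f y : ℕ) < r ↔ (y : ℕ) < r := by
  refine ⟨(hf.val_le_val_apply y).trans_lt, fun hy => ?_⟩
  suffices h : ∀ i, ∀ y : Fin a, (y : ℕ) = i → i < r → (f y : ℕ) = i by
    rw [h _ y rfl hy]; exact hy
  intro i
  induction i using Nat.strong_induction_on with
  | _ i ih =>
    intro y hyi hir
    have hib : i < b := hyi ▸ (hf.val_le_val_apply y).trans_lt (f y).isLt
    obtain ⟨z, hz⟩ := hr ⟨i, hib⟩ hir
    have hzi : (z : ℕ) ≤ i := by simpa [hz] using hf.val_le_val_apply z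
    -- a smaller `z` is already fixed by `f`, so it cannot be sent to `i`
    obtain rfl : z = y := by
      refine Fin.ext (le_antisymm (hyi ▸ hzi) (not_lt.1 fun hzy => ?_))
      have := ih z (hyi ▸ hzy) z rfl (by omega)
      rw [hz, Fin.val_mk] at this
      omega
    rw [hz]

section Relabel

variable {n r s : ℕ} {L : List (Fin (n + r))}

lemma card_compl_toFinset_of_mem_nonspecialLists (hL : L ∈ nonspecialLists (n + r) r s) :
    L.toFinsetᶜ.card = n - s + r := by
  have := length_le_of_mem_nonspecialLists hL
  rw [card_compl, List.toFinset_card_of_nodup hL.1, hL.2.1, Fintype.card_fin]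
  omega

noncomputable def relabel (hL : L ∈ nonspecialLists (n + r) r s) :
    Fin (n - s + r) ↪o Fin (n + r) :=
  L.toFinsetᶜ.orderEmbOfFin (card_compl_toFinset_of_mem_nonspecialLists hL)

variable (hL : L ∈ nonspecialLists (n + r) r s)

lemma mem_iff_notMem_range_relabel (x : Fin (n + r)) :
    x ∈ L ↔ x ∉ Set.range (relabel hL) := by
  simp [relabel]

lemma relabel_val_lt_iff (y : Fin (n - s + r)) : (relabel hL y : ℕ) < r ↔ (y : ℕ) < r := by
  refine (relabel hL).strictMono.val_lt_iff_of_forall_lt_mem_range (fun x hx => ?_) y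
  by_contra hx'
  exact (hL.2.2 x ((mem_iff_notMem_range_relabel hL x).2 hx')).not_gt hx

end Relabel

section InsertImage

variable {M N : ℕ} {f : Fin M → Fin N} {L : List (Fin N)} {P' : Finset (List (Fin M))}

lemma notMem_image_map (hLf : ∀ x, x ∈ L ↔ x ∉ Set.range f) (hL : L ≠ []) :
    L ∉ P'.image (List.map f) := by
  intro h
  obtain ⟨q, -, rfl⟩ := mem_image.1 h
  obtain ⟨y, hy⟩ := List.exists_mem_of_ne_nil _ hL
  obtain ⟨z, -, rfl⟩ := List.mem_map.1 hy
  exact (hLf (f z)).1 hy ⟨z, rfl⟩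

lemma card_insert_image_map (hf : Injective f) (hLf : ∀ x, x ∈ L ↔ x ∉ Set.range f)
    (hL : L ≠ []) : (insert L (P'.image (List.map f))).card = P'.card + 1 := by
  rw [card_insert_of_notMem (notMem_image_map hLf hL),
    card_image_of_injective _ (List.map_injective_iff.2 hf)]

lemma IsListPartition.of_insert_image_map (hf : Injective f)
    (hLf : ∀ x, x ∈ L ↔ x ∉ Set.range f)
    (hP : IsListPartition (insert L (P'.image (List.map f)))) : IsListPartition P' := by
  refine ⟨fun q hq => ?_, fun y => ?_⟩
  · have := hP.1 _ (mem_insert_of_mem (mem_image_of_mem _ hq))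
    exact ⟨by simpa using this.1, this.2.of_map _⟩
  obtain ⟨l, ⟨hl, hyl⟩, huniq⟩ := hP.2 (f y)
  rcases mem_insert.1 hl with rfl | hl
  · exact absurd ⟨y, rfl⟩ ((hLf _).1 hyl)
  obtain ⟨q, hq, rfl⟩ := mem_image.1 hl
  refine ⟨q, ⟨hq, (List.mem_map_of_injective hf).1 hyl⟩, fun q' ⟨hq', hyq'⟩ => ?_⟩
  exact List.map_injective_iff.2 hf
    (huniq _ ⟨mem_insert_of_mem (mem_image_of_mem _ hq'), List.mem_map_of_mem hyq'⟩)

lemma IsListPartition.insert_image_map (hf : Injective f)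
    (hLf : ∀ x, x ∈ L ↔ x ∉ Set.range f) (hL : L ≠ []) (hLnd : L.Nodup)
    (hP : IsListPartition P') : IsListPartition (insert L (P'.image (List.map f))) := by
  refine ⟨fun l hl => ?_, fun x => ?_⟩
  · rcases mem_insert.1 hl with rfl | hl
    · exact ⟨hL, hLnd⟩
    obtain ⟨q, hq, rfl⟩ := mem_image.1 hl
    exact ⟨by simpa using (hP.1 q hq).1, (hP.1 q hq).2.map hf⟩
  by_cases hxL : x ∈ L
  · refine ⟨L, ⟨mem_insert_self _ _, hxL⟩, fun l ⟨hl, hxl⟩ => ?_⟩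
    rcases mem_insert.1 hl with rfl | hl
    · rfl
    obtain ⟨q, -, rfl⟩ := mem_image.1 hl
    obtain ⟨y, -, rfl⟩ := List.mem_map.1 hxl
    exact absurd ⟨y, rfl⟩ ((hLf _).1 hxL)
  obtain ⟨y, rfl⟩ : x ∈ Set.range f := not_not.1 ((hLf x).not.1 hxL)
  obtain ⟨q, ⟨hq, hyq⟩, huniq⟩ := hP.2 y
  refine ⟨q.map f, ⟨mem_insert_of_mem (mem_image_of_mem _ hq), List.mem_map_of_mem hyq⟩,
    fun l ⟨hl, hxl⟩ => ?_⟩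
  rcases mem_insert.1 hl with rfl | hl
  · exact absurd hxl hxL
  obtain ⟨q', hq', rfl⟩ := mem_image.1 hl
  rw [huniq q' ⟨hq', (List.mem_map_of_injective hf).1 hxl⟩]

lemma insert_image_map_preimage_erase (hf : Injective f) (hLf : ∀ x, x ∈ L ↔ x ∉ Set.range f)
    {P : Finset (List (Fin N))} (hP : IsListPartition P) (hLP : L ∈ P) :
    insert L (((P.erase L).preimage (List.map f) (List.map_injective_iff.2 hf).injOn).image
      (List.map f)) = P := by
  rw [image_preimage, filter_true_of_mem fun l hl => ?_, insert_erase hLP]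
  rw [Set.range_list_map]
  intro x hxl
  by_contra hx
  exact ne_of_mem_erase hl (hP.eq_of_mem_of_mem (mem_of_mem_erase hl) hLP hxl ((hLf x).2 hx))

end InsertImage

lemma insert_image_map_mem_srLahSet_iff {S : Set ℕ} {r m n k : ℕ}
    {f : Fin (m + r) → Fin (n + r)} (hf : Injective f) (hfr : ∀ y, (f y : ℕ) < r ↔ (y : ℕ) < r)
    {L : List (Fin (n + r))} (hLf : ∀ x, x ∈ L ↔ x ∉ Set.range f) (hL : L ≠ [])
    (hLnd : L.Nodup) (hLS : L.length ∈ S) (hLr : ∀ x ∈ L, r ≤ (x : ℕ))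
    {P' : Finset (List (Fin (m + r)))} :
    insert L (P'.image (List.map f)) ∈ srLahSet S r n (k + 1) ↔ P' ∈ srLahSet S r m k := by
  simp only [srLahSet, Set.mem_ofPred_eq, card_insert_image_map hf hLf hL, forall_mem_insert,
    forall_mem_image, List.length_map, hLS, true_and]
  refine and_congr ⟨.of_insert_image_map hf hLf, (·.insert_image_map hf hLf hL hLnd)⟩
    (and_congr (by omega) (and_congr Iff.rfl ⟨fun h i j hi hj hij q hq hiq hjq => ?_,
      fun h i j hi hj hij => ⟨fun hiL => absurd hi (hLr i hiL).not_gt, fun q hq hiq hjq => ?_⟩⟩))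
  · exact (h (f i) (f j) ((hfr i).2 hi) ((hfr j).2 hj) (hf.ne hij)).2 hq
      (List.mem_map_of_mem hiq) (List.mem_map_of_mem hjq)
  · obtain ⟨y, hy, rfl⟩ := List.mem_map.1 hiq
    obtain ⟨z, hz, rfl⟩ := List.mem_map.1 hjq
    exact h y z ((hfr y).1 hi) ((hfr z).1 hj) (ne_of_apply_ne f hij) q hq hy hz

section Counting

variable {S : Set ℕ} {r n k s : ℕ}

lemma insert_image_relabel_mem_srLahSet_iff {L : List (Fin (n + r))}
    (hL : L ∈ nonspecialLists (n + r) r s) (hs : s ∈ S) (hs0 : 0 < s)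
    {P' : Finset (List (Fin (n - s + r)))} :
    insert L (P'.image (List.map (relabel hL))) ∈ srLahSet S r n (k + 1) ↔
      P' ∈ srLahSet S r (n - s) k :=
  insert_image_map_mem_srLahSet_iff (relabel hL).injective (relabel_val_lt_iff hL)
    (mem_iff_notMem_range_relabel hL) (List.ne_nil_of_length_pos (hL.2.1 ▸ hs0)) hL.1
    (hL.2.1 ▸ hs) hL.2.2

def markedPartitions (S : Set ℕ) (r n k : ℕ) :
    Set (Finset (List (Fin (n + r))) × List (Fin (n + r))) :=
  {PL | PL.1 ∈ srLahSet S r n k ∧ PL.2 ∈ PL.1 ∧ ∀ x ∈ PL.2, r ≤ (x : ℕ)}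

def markedPartitionsOfLength (S : Set ℕ) (r n k s : ℕ) :
    Set (Finset (List (Fin (n + r))) × List (Fin (n + r))) :=
  {PL | PL.1 ∈ srLahSet S r n k ∧ PL.2 ∈ PL.1 ∧ PL.2 ∈ nonspecialLists (n + r) r s}

lemma card_markedPartitions : Nat.card (markedPartitions S r n k) = k * srLah S r n k := by
  let e : markedPartitions S r n k ≃
      Σ P : srLahSet S r n k, (P.1.filter fun l : List (Fin (n + r)) => ∀ x ∈ l, r ≤ (x : ℕ)) :=
    { toFun PL := ⟨⟨PL.1.1, PL.2.1⟩, PL.1.2, mem_filter.2 PL.2.2⟩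
      invFun P := ⟨(P.1.1, P.2.1), P.1.2, mem_filter.1 P.2.2⟩
      left_inv _ := rfl
      right_inv _ := rfl }
  have := Fintype.ofFinite (srLahSet S r n k)
  simp_rw [Nat.card_congr e, Nat.card_sigma, Nat.card_eq_finsetCard,
    fun P : srLahSet S r n k => card_filter_forall_le_of_mem_srLahSet P.2, sum_const, card_univ,
    smul_eq_mul, srLah, Nat.card_eq_fintype_card, mul_comm]

noncomputable def markedPartitionsEquivSigma (S : Set ℕ) (r n k : ℕ) :
    markedPartitions S r n k ≃
      Σ s : ((Icc 1 n).filter (· ∈ S) : Finset ℕ), markedPartitionsOfLength S r n k s where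
  toFun PL := ⟨⟨PL.1.2.length, by
      have hL := PL.2.1.1.1 _ PL.2.2.1
      exact mem_filter.2 ⟨mem_Icc.2 ⟨List.length_pos_iff.2 hL.1,
        length_le_of_mem_nonspecialLists (s := PL.1.2.length) ⟨hL.2, rfl, PL.2.2.2⟩⟩,
        PL.2.1.2.2.1 _ PL.2.2.1⟩⟩,
    PL.1, PL.2.1, PL.2.2.1, (PL.2.1.1.1 _ PL.2.2.1).2, rfl, PL.2.2.2⟩
  invFun x := ⟨x.2.1, x.2.2.1, x.2.2.2.1, x.2.2.2.2.2.2⟩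
  left_inv _ := rfl
  right_inv := by
    rintro ⟨⟨s, hs⟩, ⟨P, L⟩, hPL⟩
    obtain rfl : s = L.length := hPL.2.2.2.1.symm
    rfl

noncomputable def markedPartitionsOfLengthEquiv (hs : s ∈ S) (hs0 : 0 < s) :
    nonspecialLists (n + r) r s × srLahSet S r (n - s) k ≃
      markedPartitionsOfLength S r n (k + 1) s :=
  Equiv.ofBijective
    (fun LP => ⟨(insert LP.1.1 (LP.2.1.image (List.map (relabel LP.1.2))), LP.1.1),
      (insert_image_relabel_mem_srLahSet_iff LP.1.2 hs hs0).2 LP.2.2, mem_insert_self _ _,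
      LP.1.2⟩)
    ⟨by
      rintro ⟨⟨L, hL⟩, P', hP'⟩ ⟨⟨L₂, hL₂⟩, Q', hQ'⟩ h
      obtain ⟨h, rfl⟩ := Prod.ext_iff.1 (Subtype.ext_iff.1 h)
      have hnil := List.ne_nil_of_length_pos (hL.2.1 ▸ hs0)
      have := congrArg (·.erase L) h
      simp only [erase_insert (notMem_image_map (mem_iff_notMem_range_relabel hL) hnil)] at this
      simp [image_injective (List.map_injective_iff.2 (relabel hL).injective) this],
    by
      rintro ⟨⟨P, L⟩, hP, hLP, hL⟩
      have hPL := insert_image_map_preimage_erase (relabel hL).injective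
        (mem_iff_notMem_range_relabel hL) hP.1 hLP
      refine ⟨(⟨L, hL⟩, ⟨_, (insert_image_relabel_mem_srLahSet_iff hL hs hs0).1 (hPL ▸ hP)⟩), ?_⟩
      exact Subtype.ext (Prod.ext hPL rfl)⟩

end Counting

theorem succ_mul_srLah_succ (S : Set ℕ) (r n k : ℕ) :
    (k + 1) * srLah S r n (k + 1) = ∑ s ∈ (Icc 1 n).filter (· ∈ S),
      s.factorial * n.choose s * srLah S r (n - s) k := by
  have e := (markedPartitionsEquivSigma S r n (k + 1)).trans <| .sigmaCongrRight fun s =>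
    (markedPartitionsOfLengthEquiv (mem_filter.1 s.2).2 (mem_Icc.1 (mem_filter.1 s.2).1).1).symm
  rw [← card_markedPartitions, Nat.card_congr e, Nat.card_sigma]
  simp only [Nat.card_prod, card_nonspecialLists]
  exact sum_coe_sort _ fun s => s.factorial * n.choose s * srLah S r (n - s) k

lemma srLahZ_natCast (S : Set ℕ) (r n k : ℕ) : srLahZ S r n k = srLah S r n k := by
  simp [srLahZ]

theorem srLah_identity_colour_list_general (S : Set ℕ) (hS : ∀ s ∈ S, 0 < s) (r n k : ℕ)
    (hk : 1 ≤ k) :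
    (k : ℤ) * srLah S r n k =
      ∑ᶠ s ∈ S, (s.factorial : ℤ) * (n.choose s : ℤ) *
        srLahZ S r ((n : ℤ) - s) ((k : ℤ) - 1) := by
  obtain ⟨k, rfl⟩ := Nat.exists_eq_add_of_le' hk
  rw [finsum_mem_eq_sum_of_subset _ (t := (Icc 1 n).filter (· ∈ S)) ?_
    fun s hs => (mem_filter.1 (mem_coe.1 hs)).2, ← Nat.cast_mul, succ_mul_srLah_succ,
    Nat.cast_sum]
  · refine sum_congr rfl fun s hs => ?_
    have hsn : s ≤ n := (mem_Icc.1 (mem_filter.1 hs).1).2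
    rw [← Nat.cast_sub hsn, Nat.cast_succ, add_sub_cancel_right, srLahZ_natCast]
    push_cast
    rfl
  · rintro s ⟨hs, hne⟩
    have hsn : s ≤ n := by
      by_contra h
      exact hne (by simp [Nat.choose_eq_zero_of_lt (not_le.1 h)])
    simpa using ⟨⟨hS s hs, hsn⟩, hs⟩

/-- `k·L_{S,r}(n,k) = Σ_{s∈S} s!·C(n,s)·L_{S,r}(n−s,k−1)`. -/
theorem srLah_identity_colour_list (S : Set ℕ) (hS : ∀ s ∈ S, 0 < s) (r n k : ℕ)
    (hn : 1 ≤ n) (hk : 1 ≤ k) :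
    (k : ℤ) * srLah S r n k =
      ∑ᶠ s ∈ S, (s.factorial : ℤ) * (n.choose s : ℤ) *
        srLahZ S r ((n : ℤ) - s) ((k : ℤ) - 1) :=
  srLah_identity_colour_list_general S hS r n k hk
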